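/- Assume additionally that K ⊂ M is a closed set with μ(K) ≥ 1 − β₀ and that (𝔠 + 1)β₀ < 1. Then for every ε > 0 there exists a constant c = c(ε) > 0, depending only on ε, β₀, 𝔠 and the compact metric space M (in particular not on ω), such that for every ω ∈ 𝒢 there exist points p̂₋ ∈ K and p̂ ∈ M and a sequence n_i → ∞ with μ^n_ω( M^n_ω ∩ B(p̂, ε) ∩ f^n_{θ^{-n}ω}(B(p̂₋, ε)) ) ≥ c for all n = n_i, where B(·, ε) denotes the open ε-ball in M. -/

import Mathlib

open MeasureTheory

/-- `Q` is the i.i.d. product of `P` over the index type `ι`, characterized via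
finite-dimensional cylinder sets. -/
def IsIIDProduct {Ω : Type*} [MeasurableSpace Ω] (ι : Type*) (P : Measure Ω)
    (Q : Measure (ι → Ω)) : Prop :=
  IsProbabilityMeasure Q ∧
    ∀ (s : Finset ι) (t : ι → Set Ω), (∀ i, MeasurableSet (t i)) →
      Q {x : ι → Ω | ∀ i ∈ s, x i ∈ t i} = ∏ i ∈ s, P (t i)

/-- The composition `f^n_{θ^{-n} ω} = f_{ω_0} ∘ f_{ω_{-1}} ∘ ⋯ ∘ f_{ω_{-n+1}}`. -/
noncomputable def fwdPast {Ω M : Type*} [TopologicalSpace M] (f : Ω → Homeomorph M M)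
    (ω : ℤ → Ω) : ℕ → M → M
  | 0 => id
  | n + 1 => (fwdPast f ω n) ∘ ⇑(f (ω (-(n : ℤ))))

/-- The backward composition `f^{-n}_ω = f^{-1}_{ω_{-(n-1)}} ∘ ⋯ ∘ f^{-1}_{ω_0}`. -/
noncomputable def bwdPast {Ω M : Type*} [TopologicalSpace M] (f : Ω → Homeomorph M M)
    (ω : ℤ → Ω) : ℕ → M → M
  | 0 => id
  | n + 1 => ⇑(f (ω (-(n : ℤ)))).symm ∘ (bwdPast f ω n)

/-- The set `M^n_ω = {x ∈ M : (f^{-n}_ω x, ((θ^{-n}ω)_k)_{k ≥ 1}) ∈ Θ_n⁺}`. -/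
noncomputable def MSet {Ω M : Type*} [TopologicalSpace M] (f : Ω → Homeomorph M M)
    (Θp : ℕ → Set (M × (ℕ → Ω))) (ω : ℤ → Ω) (n : ℕ) : Set M :=
  {x : M | (bwdPast f ω n x, fun j : ℕ => ω ((j : ℤ) + 1 - (n : ℤ))) ∈ Θp n}

/-! The internal covering number of any `K ⊆ M` at scale `ε/2` is at most the covering number
of `M` at scale `ε/4`, so every `K` is covered by boundedly many `ε`-balls centred in `K`, with a
bound `N` independent of `K`. At a good time `n` the pushed-forward measure gives mass at least
`1 - 𝔠β₀` to `M^n_ω` and at least `1 - β₀` to `f^n(K)`, hence at least `1 - (𝔠 + 1)β₀ > 0` to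
their intersection, which is covered by the sets `M^n_ω ∩ B(y, ε) ∩ f^n(B(x, ε))` for at most
`N²` pairs of centres `(x, y)`; one of them carries a `1/N²` fraction of this mass. Good times are
infinitely many and the pairs finitely many, so a single pair is chosen infinitely often. -/

open MeasureTheory Metric Filter Set
open scoped ENNReal NNReal

section RandomComposition

variable {Ω M : Type*} [TopologicalSpace M] (f : Ω → Homeomorph M M) (ω : ℤ → Ω)

theorem continuous_fwdPast (n : ℕ) : Continuous (fwdPast f ω n) := by
  induction n with
  | zero => exact continuous_id
  | succ n ih => exact ih.comp (f (ω (-(n : ℤ)))).continuous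

theorem continuous_bwdPast (n : ℕ) : Continuous (bwdPast f ω n) := by
  induction n with
  | zero => exact continuous_id
  | succ n ih => exact (f (ω (-(n : ℤ)))).symm.continuous.comp ih

theorem measurableSet_MSet [MeasurableSpace M] [BorelSpace M] [MeasurableSpace Ω]
    {Θp : ℕ → Set (M × (ℕ → Ω))} {n : ℕ} (hΘp : MeasurableSet (Θp n)) :
    MeasurableSet (MSet f Θp ω n) :=
  ((continuous_bwdPast f ω n).measurable.prodMk measurable_const) hΘp

end RandomComposition

theorem Metric.exists_card_le_finset_cover_balls {X : Type*} [PseudoMetricSpace X]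
    [CompactSpace X] {ε : ℝ} (hε : 0 < ε) :
    ∃ N : ℕ, ∀ K : Set X, ∃ t : Finset X, ↑t ⊆ K ∧ t.card ≤ N ∧ K ⊆ ⋃ x ∈ t, ball x ε := by
  set r : ℝ≥0 := ⟨ε / 2, by positivity⟩
  have hr : r / 2 ≠ 0 := (half_pos ((NNReal.coe_pos (r := r)).1 (half_pos hε))).ne'
  obtain ⟨C, -, hC, hCcover⟩ := exists_finite_isCover_of_isCompact hr (isCompact_univ (X := X))
  have hN : coveringNumber (r / 2) (univ : Set X) ≠ ⊤ :=
    ((hCcover.coveringNumber_le_encard (subset_univ C)).trans_lt hC.encard_lt_top).ne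
  refine ⟨(coveringNumber (r / 2) (univ : Set X)).toNat, fun K => ?_⟩
  have hKN : coveringNumber r K ≤ coveringNumber (r / 2) univ :=
    coveringNumber_subset_le (subset_univ K)
  have hK : coveringNumber r K ≠ ⊤ := (hKN.trans_lt hN.lt_top).ne
  refine ⟨(finite_minimalCover (ε := r) (A := K)).toFinset, by simpa using minimalCover_subset,
    ?_, ?_⟩
  · rw [← ENat.natCast_le_natCast, ENat.natCast_toNat hN, ← Set.Finite.encard_eq_coe_toFinset_card,
      encard_minimalCover hK]
    exact hKN
  · intro x hx
    obtain ⟨y, hy, hxy⟩ := mem_iUnion₂.1 ((isCover_minimalCover hK).subset_iUnion_closedBall hx)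
    refine mem_iUnion₂.2 ⟨y, by simpa using hy, closedBall_subset_ball ?_ hxy⟩
    change ε / 2 < ε
    linarith

section MassBounds

variable {α : Type*} [MeasurableSpace α]

theorem ofReal_add_sub_one_le_measure_inter {ν : Measure α} [IsProbabilityMeasure ν]
    {A B : Set α} (hA : MeasurableSet A) {a b : ℝ} (ha : ENNReal.ofReal a ≤ ν A)
    (hb : ENNReal.ofReal b ≤ ν B) : ENNReal.ofReal (a + b - 1) ≤ ν (A ∩ B) := by
  rcases le_or_gt (a + b - 1) 0 with hab | hab
  · simp [ENNReal.ofReal_of_nonpos hab]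
  refine (ENNReal.add_le_add_iff_right ENNReal.one_ne_top).1 ?_
  calc ENNReal.ofReal (a + b - 1) + 1 = ENNReal.ofReal (a + b) := by
        rw [← ENNReal.ofReal_one, ← ENNReal.ofReal_add hab.le zero_le_one, sub_add_cancel]
    _ ≤ ENNReal.ofReal a + ENNReal.ofReal b := ENNReal.ofReal_add_le
    _ ≤ ν A + ν B := add_le_add ha hb
    _ = ν (A ∪ B) + ν (A ∩ B) := (measure_union_add_inter' hA B).symm
    _ ≤ ν (A ∩ B) + 1 := by rw [add_comm]; gcongr; exact prob_le_one

theorem exists_measure_le_card_mul_of_subset_biUnion {ι : Type*} (ν : Measure α) {S : Set α}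
    (hS : ν S ≠ 0) {t : Finset ι} {T : ι → Set α} (hST : S ⊆ ⋃ i ∈ t, T i) :
    ∃ i ∈ t, ν S ≤ t.card * ν (T i) := by
  have ht : t.Nonempty := by
    rw [Finset.nonempty_iff_ne_empty]
    rintro rfl
    exact hS (measure_mono_null hST (by simp))
  refine ENNReal.exists_le_of_sum_le ht ?_
  calc ∑ _ ∈ t, ν S = t.card * ν S := by simp
    _ ≤ t.card * ∑ i ∈ t, ν (T i) := by
        gcongr
        exact (measure_mono hST).trans (measure_biUnion_finset_le t T)
    _ = ∑ i ∈ t, t.card * ν (T i) := Finset.mul_sum _ _ _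

theorem exists_ball_pair_le_card_mul_map_inter {X Y : Type*} [PseudoMetricSpace X]
    [PseudoMetricSpace Y] [MeasurableSpace X] [MeasurableSpace Y] {μ : Measure X}
    [IsProbabilityMeasure μ] {g : X → Y} (hg : Measurable g) {A : Set Y} (hA : MeasurableSet A)
    {K : Set X} {tK : Finset X} {tY : Finset Y} {ε : ℝ} (hK : K ⊆ ⋃ x ∈ tK, ball x ε)
    (hY : univ ⊆ ⋃ y ∈ tY, ball y ε) {a b : ℝ} (ha : ENNReal.ofReal a ≤ μ.map g A)
    (hb : ENNReal.ofReal b ≤ μ K) (hab : 0 < a + b - 1) :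
    ∃ q ∈ tK ×ˢ tY, ENNReal.ofReal (a + b - 1) ≤
      (tK ×ˢ tY).card * μ.map g (A ∩ ball q.2 ε ∩ g '' ball q.1 ε) := by
  have := Measure.isProbabilityMeasure_map (μ := μ) hg.aemeasurable
  have hmass : ENNReal.ofReal (a + b - 1) ≤ μ.map g (A ∩ g '' K) :=
    ofReal_add_sub_one_le_measure_inter hA ha <| hb.trans <|
      (measure_mono (subset_preimage_image g K)).trans (Measure.le_map_apply hg.aemeasurable _)
  have hcover : A ∩ g '' K ⊆ ⋃ q ∈ tK ×ˢ tY, A ∩ ball q.2 ε ∩ g '' ball q.1 ε := by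
    rintro _ ⟨hgwA, w, hwK, rfl⟩
    obtain ⟨x, hx, hwx⟩ := mem_iUnion₂.1 (hK hwK)
    obtain ⟨y, hy, hgwy⟩ := mem_iUnion₂.1 (hY (mem_univ (g w)))
    exact mem_iUnion₂.2 ⟨(x, y), Finset.mem_product.2 ⟨hx, hy⟩, ⟨hgwA, hgwy⟩, w, hwx, rfl⟩
  obtain ⟨q, hq, hle⟩ := exists_measure_le_card_mul_of_subset_biUnion _
    (hmass.trans_lt' (ENNReal.ofReal_pos.2 hab)).ne' hcover
  exact ⟨q, hq, hmass.trans hle⟩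

end MassBounds

theorem ENNReal.ofReal_div_natCast_add_one_le {δ : ℝ} {k N : ℕ} {m : ℝ≥0∞} (hkN : k ≤ N)
    (h : ENNReal.ofReal δ ≤ k * m) : ENNReal.ofReal (δ / (N + 1)) ≤ m := by
  rw [ENNReal.ofReal_div_of_pos (by positivity)]
  refine ENNReal.div_le_of_le_mul' (h.trans ?_)
  rw [ENNReal.ofReal_add (by positivity) zero_le_one, ENNReal.ofReal_natCast, ENNReal.ofReal_one]
  gcongr
  exact (Nat.cast_le.2 hkN).trans le_self_add

theorem accumulate_mass_general
    {M : Type*} [MetricSpace M] [CompactSpace M] [MeasurableSpace M] [BorelSpace M]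
    (β0 : ℝ) (c : ℝ)
    (hcb : (c + 1) * β0 < 1) (ε : ℝ) (hε : 0 < ε) :
    ∃ cε : ℝ, 0 < cε ∧
      ∀ (Ω : Type*) [TopologicalSpace Ω] [PolishSpace Ω] [MeasurableSpace Ω] [BorelSpace Ω],
      ∀ f : Ω → Homeomorph M M,
        Measurable (fun p : Ω × M => f p.1 p.2) →
        Measurable (fun p : Ω × M => (f p.1).symm p.2) →
      ∀ P : Measure Ω, IsProbabilityMeasure P →
      ∀ Pplus : Measure (ℕ → Ω), IsIIDProduct ℕ P Pplus →
      ∀ μ : Measure M, IsProbabilityMeasure μ →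
      ∀ Θp : ℕ → Set (M × (ℕ → Ω)),
        (∀ n, MeasurableSet (Θp n)) →
        (∀ n, 1 ≤ n → ENNReal.ofReal (1 - β0) ≤ (μ.prod Pplus) (Θp n)) →
      ∀ K : Set M, IsClosed K → ENNReal.ofReal (1 - β0) ≤ μ K →
      ∀ ω : ℤ → Ω,
        ω ∈ ⋂ N ≥ 1, ⋃ n ≥ N, {ω' : ℤ → Ω |
            ENNReal.ofReal (1 - c * β0) ≤
              (Measure.map (fwdPast f ω' n) μ) (MSet f Θp ω' n)} →
        ∃ pminus ∈ K, ∃ p : M, ∃ ni : ℕ → ℕ, StrictMono ni ∧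
          ∀ i : ℕ, ENNReal.ofReal cε ≤
            (Measure.map (fwdPast f ω (ni i)) μ)
              (MSet f Θp ω (ni i) ∩ Metric.ball p ε ∩
                (fwdPast f ω (ni i)) '' (Metric.ball pminus ε)) := by
  obtain ⟨N, hN⟩ := exists_card_le_finset_cover_balls (X := M) hε
  obtain ⟨tM, -, htM_card, htM⟩ := hN univ
  refine ⟨(1 - (c + 1) * β0) / ((N * N : ℕ) + 1), div_pos (by linarith) (by positivity), ?_⟩
  intro Ω _ _ _ _ f _ _ P _ Pplus _ μ _ Θp hΘp _ K _ hKμ ω hω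
  obtain ⟨tK, htK_sub, htK_card, htK⟩ := hN K
  have hgood : ∃ᶠ n in atTop, ENNReal.ofReal (1 - c * β0) ≤
      (Measure.map (fwdPast f ω n) μ) (MSet f Θp ω n) := frequently_atTop.2 fun n => by
    obtain ⟨m, hm, hmω⟩ := mem_iUnion₂.1 (mem_iInter₂.1 hω (n + 1) (by omega))
    exact ⟨m, by omega, hmω⟩
  have hpair : ∃ᶠ n in atTop, ∃ q ∈ tK ×ˢ tM,
      ENNReal.ofReal ((1 - (c + 1) * β0) / ((N * N : ℕ) + 1)) ≤ (Measure.map (fwdPast f ω n) μ)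
        (MSet f Θp ω n ∩ ball q.2 ε ∩ fwdPast f ω n '' ball q.1 ε) := by
    refine hgood.mono fun n hn => ?_
    obtain ⟨q, hq, hle⟩ := exists_ball_pair_le_card_mul_map_inter
      (continuous_fwdPast f ω n).measurable (measurableSet_MSet f ω (hΘp n)) htK htM hn hKμ
      (by linarith)
    rw [show 1 - c * β0 + (1 - β0) - 1 = 1 - (c + 1) * β0 by ring] at hle
    have hcard : (tK ×ˢ tM).card ≤ N * N := by
      rw [Finset.card_product]
      exact Nat.mul_le_mul htK_card htM_card
    exact ⟨q, hq, ENNReal.ofReal_div_natCast_add_one_le hcard hle⟩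
  obtain ⟨q, hq, hq_freq⟩ := (Finset.frequently_exists _).1 hpair
  obtain ⟨ni, hni, hni_mass⟩ := extraction_of_frequently_atTop hq_freq
  exact ⟨q.1, htK_sub (Finset.mem_product.1 hq).1, q.2, ni, hni, hni_mass⟩

/-- Lemma 4.3 (accumulating mass): there is a constant `c(ε) > 0`, depending only on
`ε`, `β₀`, `𝔠` and the compact metric space `M` (in particular not on `ω`), such that for
every `ω ∈ 𝒢` there are a source center `p̂₋ ∈ K`, a target center `p̂ ∈ M`, and a
sequence `n_i → ∞` along which `μ^n_ω(M^n_ω ∩ B(p̂, ε) ∩ f^n_{θ^{-n}ω} B(p̂₋, ε)) ≥ c`. -/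
theorem accumulate_mass
    {M : Type*} [MetricSpace M] [CompactSpace M] [MeasurableSpace M] [BorelSpace M]
    (β0 : ℝ) (hβ0 : β0 ∈ Set.Ioo (0 : ℝ) 1) (c : ℝ) (hc : 1 < c)
    (hcb : (c + 1) * β0 < 1) (ε : ℝ) (hε : 0 < ε) :
    ∃ cε : ℝ, 0 < cε ∧
      ∀ (Ω : Type*) [TopologicalSpace Ω] [PolishSpace Ω] [MeasurableSpace Ω] [BorelSpace Ω],
      ∀ f : Ω → Homeomorph M M,
        Measurable (fun p : Ω × M => f p.1 p.2) →
        Measurable (fun p : Ω × M => (f p.1).symm p.2) →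
      ∀ P : Measure Ω, IsProbabilityMeasure P →
      ∀ Pplus : Measure (ℕ → Ω), IsIIDProduct ℕ P Pplus →
      ∀ μ : Measure M, IsProbabilityMeasure μ →
      ∀ Θp : ℕ → Set (M × (ℕ → Ω)),
        (∀ n, MeasurableSet (Θp n)) →
        (∀ n, 1 ≤ n → ENNReal.ofReal (1 - β0) ≤ (μ.prod Pplus) (Θp n)) →
      ∀ K : Set M, IsClosed K → ENNReal.ofReal (1 - β0) ≤ μ K →
      ∀ ω : ℤ → Ω,
        ω ∈ ⋂ N ≥ 1, ⋃ n ≥ N, {ω' : ℤ → Ω |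
            ENNReal.ofReal (1 - c * β0) ≤
              (Measure.map (fwdPast f ω' n) μ) (MSet f Θp ω' n)} →
        ∃ pminus ∈ K, ∃ p : M, ∃ ni : ℕ → ℕ, StrictMono ni ∧
          ∀ i : ℕ, ENNReal.ofReal cε ≤
            (Measure.map (fwdPast f ω (ni i)) μ)
              (MSet f Θp ω (ni i) ∩ Metric.ball p ε ∩
                (fwdPast f ω (ni i)) '' (Metric.ball pminus ε)) :=
  accumulate_mass_general β0 c hcb ε hε
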